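/- arXiv:1906.00105 — 2 statements merged into one kernel-verified Lean document; each statement's English description precedes it below -/
import Mathlib

section
/- Let D ⊆ ℝ^m, let L ∈ ℝ^{m×m}, and let (x̂_j, y_j), j = 1,…,M, be data with x̂_j ∈ D that are consistent with L, i.e. |y_i − y_j| ≤ ‖L(x̂_i − x̂_j)‖₂ for all i, j. Then for every x ∈ D, the uncertainty set 𝒰(x) := { f(x) : f ∈ 𝓛(D, L), f(x̂_j) = y_j for all j = 1,…,M } equals the closed interval [ max_{j=1,…,M} (y_j − ‖L(x − x̂_j)‖₂), min_{j=1,…,M} (y_j + ‖L(x − x̂_j)‖₂) ], which is nonempty. -/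
open Matrix

/-- The matrix-vector product as a map on Euclidean space,
so that `‖mulVecE L v‖` is the Euclidean 2-norm of `L v`. -/
noncomputable def mulVecE {m : ℕ} (L : Matrix (Fin m) (Fin m) ℝ)
    (v : EuclideanSpace ℝ (Fin m)) : EuclideanSpace ℝ (Fin m) :=
  Matrix.toEuclideanCLM (𝕜 := ℝ) L v

/-- The Lipschitz-matrix class `𝓛(D, L)`. -/
def MemLip {m : ℕ} (D : Set (EuclideanSpace ℝ (Fin m))) (L : Matrix (Fin m) (Fin m) ℝ)
    (f : EuclideanSpace ℝ (Fin m) → ℝ) : Prop :=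
  ∀ x₁ ∈ D, ∀ x₂ ∈ D, |f x₁ - f x₂| ≤ ‖mulVecE L (x₁ - x₂)‖

/-- The lower envelope `f₋(x) = max_j (y_j - ‖L(x - x̂_j)‖₂)` determined by data `(x̂_j, y_j)`. -/
noncomputable def lowerEnv {m M : ℕ} (L : Matrix (Fin m) (Fin m) ℝ)
    (xh : Fin M → EuclideanSpace ℝ (Fin m)) (y : Fin M → ℝ)
    (x : EuclideanSpace ℝ (Fin m)) : ℝ :=
  ⨆ j, (y j - ‖mulVecE L (x - xh j)‖)

/-- The upper envelope `f₊(x) = min_j (y_j + ‖L(x - x̂_j)‖₂)` determined by data `(x̂_j, y_j)`. -/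
noncomputable def upperEnv {m M : ℕ} (L : Matrix (Fin m) (Fin m) ℝ)
    (xh : Fin M → EuclideanSpace ℝ (Fin m)) (y : Fin M → ℝ)
    (x : EuclideanSpace ℝ (Fin m)) : ℝ :=
  ⨅ j, (y j + ‖mulVecE L (x - xh j)‖)

/-- The central approximation `f̄ = (f₋ + f₊)/2`. -/
noncomputable def centralApprox {m M : ℕ} (L : Matrix (Fin m) (Fin m) ℝ)
    (xh : Fin M → EuclideanSpace ℝ (Fin m)) (y : Fin M → ℝ)
    (x : EuclideanSpace ℝ (Fin m)) : ℝ :=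
  (lowerEnv L xh y x + upperEnv L xh y x) / 2

open Set

/-!
`‖L (a - b)‖` is the distance between `L a` and `L b`, so `𝓛(D, L)` contains every function
`F ∘ L` with `F` 1-Lipschitz on `ℝ^m`. A value `t` is attainable at `x` exactly when `t` is within
distance `‖L (x - x̂_j)‖` of every `y_j`, i.e. when `t` lies in the interval; conversely such a `t`
makes the data extended by `(L x, t)` consistent, and McShane's extension of those data to all of
`ℝ^m`, composed with `L`, attains it. Nonemptiness comes from extending the data alone.
-/

theorem norm_mulVecE_sub {m : ℕ} (L : Matrix (Fin m) (Fin m) ℝ) (a b : EuclideanSpace ℝ (Fin m)) :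
    ‖mulVecE L (a - b)‖ = dist (mulVecE L a) (mulVecE L b) := by
  rw [mulVecE, mulVecE, mulVecE, map_sub, dist_eq_norm]

theorem memLip_comp_mulVecE {m : ℕ} (D : Set (EuclideanSpace ℝ (Fin m)))
    (L : Matrix (Fin m) (Fin m) ℝ) {F : EuclideanSpace ℝ (Fin m) → ℝ} (hF : LipschitzWith 1 F) :
    MemLip D L (F ∘ mulVecE L) := fun a _ b _ => by
  simpa only [Function.comp_apply, norm_mulVecE_sub, Real.dist_eq, NNReal.coe_one, one_mul] using
    hF.dist_le_mul (mulVecE L a) (mulVecE L b)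

theorem mem_Icc_ciSup_sub_ciInf_add_iff {ι : Type*} [Finite ι] [Nonempty ι] {y d : ι → ℝ}
    {t : ℝ} : t ∈ Icc (⨆ j, y j - d j) (⨅ j, y j + d j) ↔ ∀ j, |t - y j| ≤ d j := by
  rw [mem_Icc, ciSup_le_iff (Finite.bddAbove_range _), le_ciInf_iff (Finite.bddBelow_range _),
    ← forall_and]
  refine forall_congr' fun j => ?_
  rw [abs_sub_le_iff]
  constructor <;> rintro ⟨h₁, h₂⟩ <;> constructor <;> linarith

theorem mem_Icc_lowerEnv_upperEnv_iff {m M : ℕ} [Nonempty (Fin M)] (L : Matrix (Fin m) (Fin m) ℝ)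
    (xh : Fin M → EuclideanSpace ℝ (Fin m)) (y : Fin M → ℝ) (x : EuclideanSpace ℝ (Fin m))
    (t : ℝ) :
    t ∈ Icc (lowerEnv L xh y x) (upperEnv L xh y x) ↔ ∀ j, |t - y j| ≤ ‖mulVecE L (x - xh j)‖ :=
  mem_Icc_ciSup_sub_ciInf_add_iff

section Interpolation

variable {ι P : Type*} [PseudoMetricSpace P] {q : ι → P} {y : ι → ℝ}

theorem exists_lipschitzWith_one_interpolant [Nonempty ι]
    (hq : ∀ i j, |y i - y j| ≤ dist (q i) (q j)) :
    ∃ F : P → ℝ, LipschitzWith 1 F ∧ ∀ i, F (q i) = y i := by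
  -- Consistency forces equal data at points of distance zero, so `y ∘ invFun q` restricts `y`.
  have hinv : ∀ i, y (Function.invFun q (q i)) = y i := fun i => by
    have := hq (Function.invFun q (q i)) i
    rwa [Function.invFun_eq (f := q) ⟨i, rfl⟩, dist_self, abs_nonpos_iff, sub_eq_zero] at this
  have hlip : LipschitzOnWith 1 (y ∘ Function.invFun q) (range q) := by
    refine LipschitzOnWith.of_dist_le_mul ?_
    rintro _ ⟨i, rfl⟩ _ ⟨j, rfl⟩
    simpa only [Function.comp_apply, hinv, Real.dist_eq, NNReal.coe_one, one_mul] using hq i j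
  obtain ⟨F, hF, hFq⟩ := hlip.extend_real
  exact ⟨F, hF, fun i => by rw [← hFq (mem_range_self i), Function.comp_apply, hinv]⟩

theorem exists_lipschitzWith_one_interpolant_of_abs_sub_le
    (hq : ∀ i j, |y i - y j| ≤ dist (q i) (q j)) {w : P} {t : ℝ}
    (ht : ∀ j, |t - y j| ≤ dist w (q j)) :
    ∃ F : P → ℝ, LipschitzWith 1 F ∧ (∀ i, F (q i) = y i) ∧ F w = t := by
  have hq' : ∀ a b : Option ι, |a.elim t y - b.elim t y| ≤ dist (a.elim w q) (b.elim w q) := by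
    rintro (_ | i) (_ | j)
    · simp
    · exact ht j
    · simpa only [Option.elim, abs_sub_comm, dist_comm] using ht i
    · exact hq i j
  obtain ⟨F, hF, hFq⟩ := exists_lipschitzWith_one_interpolant hq'
  exact ⟨F, hF, fun i => hFq (some i), hFq none⟩

end Interpolation

/-- for data consistent with `L`, the pointwise uncertainty set at `x ∈ D` equals
the closed interval `[max_j (y_j - ‖L(x - x̂_j)‖), min_j (y_j + ‖L(x - x̂_j)‖)]`, which is
nonempty. -/
theorem uncertainty_set_eq_Icc {m M : ℕ} (hM : 0 < M)
    (D : Set (EuclideanSpace ℝ (Fin m))) (L : Matrix (Fin m) (Fin m) ℝ)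
    (xh : Fin M → EuclideanSpace ℝ (Fin m)) (y : Fin M → ℝ)
    (hx : ∀ j, xh j ∈ D)
    (hcons : ∀ i j, |y i - y j| ≤ ‖mulVecE L (xh i - xh j)‖)
    (x : EuclideanSpace ℝ (Fin m)) (hxD : x ∈ D) :
    {t : ℝ | ∃ f : EuclideanSpace ℝ (Fin m) → ℝ,
        MemLip D L f ∧ (∀ j, f (xh j) = y j) ∧ f x = t}
      = Set.Icc (lowerEnv L xh y x) (upperEnv L xh y x) ∧
      (Set.Icc (lowerEnv L xh y x) (upperEnv L xh y x)).Nonempty := by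
  have : Nonempty (Fin M) := ⟨⟨0, hM⟩⟩
  have hq : ∀ i j, |y i - y j| ≤ dist (mulVecE L (xh i)) (mulVecE L (xh j)) := by
    simpa only [norm_mulVecE_sub] using hcons
  have hset : {t : ℝ | ∃ f : EuclideanSpace ℝ (Fin m) → ℝ,
      MemLip D L f ∧ (∀ j, f (xh j) = y j) ∧ f x = t} =
        Icc (lowerEnv L xh y x) (upperEnv L xh y x) := by
    ext t
    rw [mem_Icc_lowerEnv_upperEnv_iff]
    constructor
    · rintro ⟨f, hf, hfy, rfl⟩ j
      simpa only [hfy] using hf x hxD (xh j) (hx j)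
    · intro ht
      obtain ⟨F, hF, hFq, hFx⟩ := exists_lipschitzWith_one_interpolant_of_abs_sub_le hq
        (w := mulVecE L x) (by simpa only [norm_mulVecE_sub] using ht)
      exact ⟨F ∘ mulVecE L, memLip_comp_mulVecE D L hF, hFq, hFx⟩
  obtain ⟨F, hF, hFq⟩ := exists_lipschitzWith_one_interpolant hq
  exact ⟨hset, F (mulVecE L x), hset ▸ ⟨F ∘ mulVecE L, memLip_comp_mulVecE D L hF, hFq, rfl⟩⟩
end

section
/- Let D ⊆ ℝ^m, let L ∈ ℝ^{m×m}, and let (x̂_j, y_j), j = 1,…,M, be data with x̂_j ∈ D that are consistent with L. Let f̄ be the central approximation. Then for every x ∈ D, sup{ |f(x) − f̄(x)| : f ∈ 𝓛(D, L), f(x̂_j) = y_j ∀j } = ½ ( min_{j} (y_j + ‖L(x − x̂_j)‖₂) − max_{j} (y_j − ‖L(x − x̂_j)‖₂) ); in particular, when y_j = 0 for all j, this worst-case pointwise error equals min_{j=1,…,M} ‖L(x − x̂_j)‖₂. -/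
open Matrix

/-!
Every admissible `f` is squeezed between the envelopes at `x`: comparing `f x` with each datum
through the Lipschitz bound gives `f₋(x) ≤ f(x) ≤ f₊(x)`, hence `|f(x) - f̄(x)| ≤ (f₊(x) - f₋(x))/2`.
The bound is attained by `f₊` itself, a minimum of cones `y_j + ‖L(· - x̂_j)‖₂` that is in
`𝓛(D, L)` by the triangle inequality and interpolates the data because they are consistent.
-/

section mulVecE

variable {m : ℕ} (L : Matrix (Fin m) (Fin m) ℝ)

lemma norm_mulVecE_sub_comm (a b : EuclideanSpace ℝ (Fin m)) :
    ‖mulVecE L (a - b)‖ = ‖mulVecE L (b - a)‖ := by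
  rw [← neg_sub, mulVecE, map_neg, norm_neg, mulVecE]

lemma norm_mulVecE_sub_le (a b c : EuclideanSpace ℝ (Fin m)) :
    ‖mulVecE L (a - c)‖ ≤ ‖mulVecE L (a - b)‖ + ‖mulVecE L (b - c)‖ := by
  have h : mulVecE L (a - c) = mulVecE L (a - b) + mulVecE L (b - c) := by
    simp only [mulVecE, ← map_add, sub_add_sub_cancel]
  exact h ▸ norm_add_le _ _

end mulVecE

section envelopes

variable {m M : ℕ} (L : Matrix (Fin m) (Fin m) ℝ) (xh : Fin M → EuclideanSpace ℝ (Fin m))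
  (y : Fin M → ℝ)

lemma upperEnv_le (x : EuclideanSpace ℝ (Fin m)) (j : Fin M) :
    upperEnv L xh y x ≤ y j + ‖mulVecE L (x - xh j)‖ :=
  ciInf_le (Finite.bddBelow_range _) j

variable [Nonempty (Fin M)]

lemma le_upperEnv_iff {x : EuclideanSpace ℝ (Fin m)} {a : ℝ} :
    a ≤ upperEnv L xh y x ↔ ∀ j, a ≤ y j + ‖mulVecE L (x - xh j)‖ :=
  le_ciInf_iff (Finite.bddBelow_range _)

lemma lowerEnv_le_iff {x : EuclideanSpace ℝ (Fin m)} {a : ℝ} :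
    lowerEnv L xh y x ≤ a ↔ ∀ j, y j - ‖mulVecE L (x - xh j)‖ ≤ a :=
  ciSup_le_iff (Finite.bddAbove_range _)

lemma upperEnv_sub_upperEnv_le (a b : EuclideanSpace ℝ (Fin m)) :
    upperEnv L xh y a - upperEnv L xh y b ≤ ‖mulVecE L (a - b)‖ := by
  rw [sub_le_comm, le_upperEnv_iff]
  intro j
  linarith [upperEnv_le L xh y a j, norm_mulVecE_sub_le L a b (xh j)]

lemma memLip_upperEnv (D : Set (EuclideanSpace ℝ (Fin m))) : MemLip D L (upperEnv L xh y) :=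
  fun a _ b _ => abs_sub_le_iff.2
    ⟨upperEnv_sub_upperEnv_le L xh y a b,
      norm_mulVecE_sub_comm L a b ▸ upperEnv_sub_upperEnv_le L xh y b a⟩

lemma upperEnv_apply_data (hcons : ∀ i j, |y i - y j| ≤ ‖mulVecE L (xh i - xh j)‖) (i : Fin M) :
    upperEnv L xh y (xh i) = y i := by
  refine le_antisymm ?_ ((le_upperEnv_iff L xh y).2 fun j => ?_)
  · simpa [mulVecE] using upperEnv_le L xh y (xh i) i
  · linarith [(abs_sub_le_iff.1 (hcons i j)).1]

variable {L xh y} {D : Set (EuclideanSpace ℝ (Fin m))} {f : EuclideanSpace ℝ (Fin m) → ℝ}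

lemma MemLip.le_upperEnv (hf : MemLip D L f) (hx : ∀ j, xh j ∈ D) (hfy : ∀ j, f (xh j) = y j)
    {x : EuclideanSpace ℝ (Fin m)} (hxD : x ∈ D) : f x ≤ upperEnv L xh y x :=
  (le_upperEnv_iff L xh y).2 fun j => by
    linarith [(abs_sub_le_iff.1 (hf x hxD (xh j) (hx j))).1, hfy j]

lemma MemLip.lowerEnv_le (hf : MemLip D L f) (hx : ∀ j, xh j ∈ D) (hfy : ∀ j, f (xh j) = y j)
    {x : EuclideanSpace ℝ (Fin m)} (hxD : x ∈ D) : lowerEnv L xh y x ≤ f x :=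
  (lowerEnv_le_iff L xh y).2 fun j => by
    linarith [(abs_sub_le_iff.1 (hf x hxD (xh j) (hx j))).2, hfy j]

theorem isGreatest_abs_sub_centralApprox (hx : ∀ j, xh j ∈ D)
    (hcons : ∀ i j, |y i - y j| ≤ ‖mulVecE L (xh i - xh j)‖)
    {x : EuclideanSpace ℝ (Fin m)} (hxD : x ∈ D) :
    IsGreatest {e : ℝ | ∃ f : EuclideanSpace ℝ (Fin m) → ℝ,
        MemLip D L f ∧ (∀ j, f (xh j) = y j) ∧ e = |f x - centralApprox L xh y x|}
      ((upperEnv L xh y x - lowerEnv L xh y x) / 2) := by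
  have hup := memLip_upperEnv L xh y D
  have hupy := upperEnv_apply_data L xh y hcons
  have hlu : lowerEnv L xh y x ≤ upperEnv L xh y x := hup.lowerEnv_le hx hupy hxD
  refine ⟨⟨upperEnv L xh y, hup, hupy, ?_⟩, ?_⟩
  · rw [centralApprox, abs_of_nonneg (by linarith)]
    ring
  · rintro e ⟨f, hf, hfy, rfl⟩
    have hl := hf.lowerEnv_le hx hfy hxD
    have hu := hf.le_upperEnv hx hfy hxD
    rw [centralApprox, abs_le]
    constructor <;> linarith

end envelopes

section zeroData

variable {m M : ℕ} (L : Matrix (Fin m) (Fin m) ℝ) (xh : Fin M → EuclideanSpace ℝ (Fin m))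
  (x : EuclideanSpace ℝ (Fin m))

lemma upperEnv_zero : upperEnv L xh 0 x = ⨅ j, ‖mulVecE L (x - xh j)‖ := by
  simp [upperEnv]

lemma lowerEnv_zero : lowerEnv L xh 0 x = -⨅ j, ‖mulVecE L (x - xh j)‖ := by
  simpa [lowerEnv] using (Real.mul_iInf_of_nonpos (r := -1) (by norm_num) _).symm

end zeroData

/-- the worst-case pointwise error of the central approximation equals half the gap
between the upper and lower envelopes; in particular, for zero data it equals
`min_j ‖L(x - x̂_j)‖₂`. -/
theorem centralApprox_worst_case_error {m M : ℕ} (hM : 0 < M)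
    (D : Set (EuclideanSpace ℝ (Fin m))) (L : Matrix (Fin m) (Fin m) ℝ)
    (xh : Fin M → EuclideanSpace ℝ (Fin m)) (y : Fin M → ℝ)
    (hx : ∀ j, xh j ∈ D)
    (hcons : ∀ i j, |y i - y j| ≤ ‖mulVecE L (xh i - xh j)‖)
    (x : EuclideanSpace ℝ (Fin m)) (hxD : x ∈ D) :
    sSup {e : ℝ | ∃ f : EuclideanSpace ℝ (Fin m) → ℝ,
        MemLip D L f ∧ (∀ j, f (xh j) = y j) ∧ e = |f x - centralApprox L xh y x|}
      = (upperEnv L xh y x - lowerEnv L xh y x) / 2 ∧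
      ((∀ j, y j = 0) →
        sSup {e : ℝ | ∃ f : EuclideanSpace ℝ (Fin m) → ℝ,
            MemLip D L f ∧ (∀ j, f (xh j) = y j) ∧ e = |f x - centralApprox L xh y x|}
          = ⨅ j, ‖mulVecE L (x - xh j)‖) := by
  have : Nonempty (Fin M) := Fin.pos_iff_nonempty.mp hM
  have hsup := (isGreatest_abs_sub_centralApprox hx hcons hxD).csSup_eq
  refine ⟨hsup, fun hy => ?_⟩
  obtain rfl : y = 0 := funext hy
  rw [hsup, upperEnv_zero, lowerEnv_zero]
  ring
end
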